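/- Theorem V.2 (the nonlinear blend relaxation never does worse than the best linear controller): Fix A ∈ ℝ^{n×n}, B ∈ ℝ^{n×m}, horizon T ≥ 1, levels 0 ≤ η_1 ≤ η_2 with η_2 > 0, bounds x_max, u_max > 0, symmetric positive semidefinite Q ∈ ℝ^{n×n}, P ∈ ℝ^{m×m}, and a real random variable w with |w| ≤ η_2 almost surely, E[w] = 0 and E[w²] = σ². Let s_η(a) = sign(a)min(|a|,η) and set α_1 = E[s_{η_1}(w)²], α_2 = E[s_{η_1}(w)(s_{η_2}(w) − s_{η_1}(w))], α_3 = E[(s_{η_2}(w) − s_{η_1}(w))²]. For concatenations R = [R_T ⋯ R_1], M = [M_T ⋯ M_1], call a 4-tuple (R¹, R², M¹, M²) blend-feasible if (Rⁱ, Mⁱ) satisfies the SLS feasibility conditions for (A,B) with horizon T for i = 1,2, η_1‖R¹‖ + (η_2 − η_1)‖R²‖ ≤ x_max and η_1‖M¹‖ + (η_2 − η_1)‖M²‖ ≤ u_max, and define its cost as tr([R¹ R²] Σ_w [R¹ R²]ᵀ Q) + tr([M¹ M²] Σ_w [M¹ M²]ᵀ P), where Σ_w is the 2×2 block matrix with blocks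 α_1 I, α_2 I; α_2 I, α_3 I (identity of size nT). Then: (a) α_1 + 2α_2 + α_3 = σ²; (b) for any (R, M) satisfying the SLS feasibility conditions with η_2‖R‖ ≤ x_max and η_2‖M‖ ≤ u_max, the tuple (R, R, M, M) is blend-feasible and its cost equals σ²(tr(R Rᵀ Q) + tr(M Mᵀ P)); consequently (c) the infimum of the cost over all blend-feasible tuples is at most σ²(tr(R Rᵀ Q) + tr(M Mᵀ P)) for every such linear pair (R, M). -/

import Mathlib

open MeasureTheory Matrix

/-- Scalar saturation at level `η`: `sat(a,η) = sign(a)·min(|a|,η)`. -/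
noncomputable def satScalar (η a : ℝ) : ℝ := Real.sign a * min |a| η

/-- Induced ℓ∞→ℓ∞ norm (maximum absolute row sum) of the row-wise
concatenation `[M_T M_{T-1} ⋯ M_1]`. -/
noncomputable def concatNorm {p n : ℕ} (T : ℕ) (M : ℕ → Matrix (Fin p) (Fin n) ℝ) : ℝ :=
  ⨆ r : Fin p, ∑ k ∈ Finset.Icc 1 T, ∑ j : Fin n, |M k r j|

/-- SLS feasibility conditions for `(A, B)` with horizon `T`. -/
def SLSFeasible {n m : ℕ} (A : Matrix (Fin n) (Fin n) ℝ) (B : Matrix (Fin n) (Fin m) ℝ)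
    (T : ℕ) (R : ℕ → Matrix (Fin n) (Fin n) ℝ) (M : ℕ → Matrix (Fin m) (Fin n) ℝ) : Prop :=
  R 1 = 1 ∧
  (∀ k : ℕ, 1 ≤ k → k + 1 ≤ T → R (k + 1) = A * R k + B * M k) ∧
  A * R T + B * M T = 0

/-- Row-wise concatenation `[M_T ⋯ M_1]` as a `p × (T·n)` matrix
(column index `(k, j)` addresses the `j`-th column of `M_{k+1}`). -/
noncomputable def concat1 {p n : ℕ} (T : ℕ) (M : ℕ → Matrix (Fin p) (Fin n) ℝ) :
    Matrix (Fin p) (Fin T × Fin n) ℝ :=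
  fun r c => M (c.1 + 1) r c.2

/-- Two-block row-wise concatenation `[M¹ M²]` of the concatenations of two
FIR families, as a `p × (2·T·n)` matrix. -/
noncomputable def concat2 {p n : ℕ} (T : ℕ) (M1 M2 : ℕ → Matrix (Fin p) (Fin n) ℝ) :
    Matrix (Fin p) (Fin 2 × Fin T × Fin n) ℝ :=
  fun r c => (if c.1 = 0 then M1 else M2) (c.2.1 + 1) r c.2.2

/-- The 2×2-block matrix `Σ_w` with blocks `α₁ I, α₂ I; α₂ I, α₃ I`
(identity of size `T·n`). -/
noncomputable def Sigw (n T : ℕ) (α₁ α₂ α₃ : ℝ) :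
    Matrix (Fin 2 × Fin T × Fin n) (Fin 2 × Fin T × Fin n) ℝ :=
  fun x y => if x.2 = y.2 then !![α₁, α₂; α₂, α₃] x.1 y.1 else 0

/-- Blend feasibility: both `(Rⁱ, Mⁱ)` satisfy the SLS feasibility conditions
and the two safety bounds `η₁‖R¹‖ + (η₂−η₁)‖R²‖ ≤ x_max`,
`η₁‖M¹‖ + (η₂−η₁)‖M²‖ ≤ u_max` hold. -/
def BlendFeasible {n m : ℕ} (A : Matrix (Fin n) (Fin n) ℝ) (B : Matrix (Fin n) (Fin m) ℝ)
    (T : ℕ) (η₁ η₂ xmax umax : ℝ)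
    (R1 R2 : ℕ → Matrix (Fin n) (Fin n) ℝ) (M1 M2 : ℕ → Matrix (Fin m) (Fin n) ℝ) : Prop :=
  SLSFeasible A B T R1 M1 ∧ SLSFeasible A B T R2 M2 ∧
  η₁ * concatNorm T R1 + (η₂ - η₁) * concatNorm T R2 ≤ xmax ∧
  η₁ * concatNorm T M1 + (η₂ - η₁) * concatNorm T M2 ≤ umax

/-- The cost `tr([R¹ R²] Σ_w [R¹ R²]ᵀ Q) + tr([M¹ M²] Σ_w [M¹ M²]ᵀ P)`. -/
noncomputable def blendCost {n m : ℕ} (T : ℕ)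
    (Q : Matrix (Fin n) (Fin n) ℝ) (P : Matrix (Fin m) (Fin m) ℝ) (α₁ α₂ α₃ : ℝ)
    (R1 R2 : ℕ → Matrix (Fin n) (Fin n) ℝ) (M1 M2 : ℕ → Matrix (Fin m) (Fin n) ℝ) : ℝ :=
  Matrix.trace (concat2 T R1 R2 * Sigw n T α₁ α₂ α₃ * (concat2 T R1 R2)ᵀ * Q) +
  Matrix.trace (concat2 T M1 M2 * Sigw n T α₁ α₂ α₃ * (concat2 T M1 M2)ᵀ * P)

/-!
Since `|w| ≤ η₂` almost surely, `s_{η₂}(w) = w`, so `X = s_{η₁}(w)` and `Y = s_{η₂}(w) - s_{η₁}(w)`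
add up to `w`; the matrix `[α₁ α₂; α₂ α₃]` is the second-moment matrix of `(X, Y)`, hence
`α₁ + 2α₂ + α₃ = E[(X + Y)²] = σ²` and `Σ_w = [α₁ α₂; α₂ α₃] ⊗ I` is positive semidefinite.
Feeding the linear pair into both blocks collapses `[R R] Σ_w [R R]ᵀ` to `(α₁ + 2α₂ + α₃) R Rᵀ`,
while positive semidefiniteness of `Σ_w`, `Q` and `P` bounds every blend cost below by `0`.
-/

open scoped ComplexOrder Kronecker

theorem Matrix.PosSemidef.trace_mul_nonneg {𝕜 n : Type*} [RCLike 𝕜] [Fintype n]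
    {A B : Matrix n n 𝕜} (hA : A.PosSemidef) (hB : B.PosSemidef) : 0 ≤ (A * B).trace := by
  classical
  open scoped MatrixOrder in
  obtain ⟨L, rfl⟩ := CStarAlgebra.nonneg_iff_eq_star_mul_self.mp hB.nonneg
  rw [star_eq_conjTranspose, ← Matrix.mul_assoc, trace_mul_comm, ← Matrix.mul_assoc]
  exact (hA.mul_mul_conjTranspose_same L).trace_nonneg

theorem Matrix.submatrix_snd_mul_kronecker_one_mul_transpose {p ι κ R : Type*}
    [Fintype ι] [Fintype κ] [DecidableEq ι] [CommRing R]
    (C : Matrix p ι R) (G : Matrix κ κ R) :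
    C.submatrix id (Prod.snd : κ × ι → ι) * (G ⊗ₖ (1 : Matrix ι ι R)) *
        (C.submatrix id (Prod.snd : κ × ι → ι))ᵀ = (∑ i, ∑ j, G i j) • (C * Cᵀ) := by
  ext r r'
  simp only [transpose_submatrix, mul_apply, submatrix_apply, id_eq, kroneckerMap_apply,
    one_apply, mul_ite, mul_one, mul_zero, Fintype.sum_prod_type, Finset.sum_ite_eq',
    Finset.mem_univ, if_true, transpose_apply, Finset.sum_mul, smul_apply, smul_eq_mul,
    Finset.mul_sum]
  rw [Finset.sum_comm]
  refine Fintype.sum_congr _ _ fun z => ?_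
  rw [Finset.sum_comm]
  exact Fintype.sum_congr _ _ fun i => Fintype.sum_congr _ _ fun j => by ring

section SecondMoments

variable {Ω : Type*} [MeasurableSpace Ω] {μ : Measure Ω} {X Y : Ω → ℝ}

theorem integral_linear_combination_sq (hX : MemLp X 2 μ) (hY : MemLp Y 2 μ) (a b : ℝ) :
    ∫ ω, (a * X ω + b * Y ω) ^ 2 ∂μ =
      a ^ 2 * ∫ ω, X ω ^ 2 ∂μ + 2 * (a * b) * ∫ ω, X ω * Y ω ∂μ + b ^ 2 * ∫ ω, Y ω ^ 2 ∂μ := by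
  have hXX : Integrable (fun ω => a ^ 2 * X ω ^ 2) μ := hX.integrable_sq.const_mul _
  have hXY : Integrable (fun ω => 2 * (a * b) * (X ω * Y ω)) μ :=
    (hX.integrable_mul hY).const_mul _
  have hYY : Integrable (fun ω => b ^ 2 * Y ω ^ 2) μ := hY.integrable_sq.const_mul _
  calc ∫ ω, (a * X ω + b * Y ω) ^ 2 ∂μ
      = ∫ ω, (a ^ 2 * X ω ^ 2 + 2 * (a * b) * (X ω * Y ω)) + b ^ 2 * Y ω ^ 2 ∂μ := by
        congr with ω; ring
    _ = _ := by
        rw [integral_add _ hYY, integral_add hXX hXY, integral_const_mul, integral_const_mul,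
          integral_const_mul]
        exact hXX.add hXY

theorem posSemidef_second_moments (hX : MemLp X 2 μ) (hY : MemLp Y 2 μ) :
    !![∫ ω, X ω ^ 2 ∂μ, ∫ ω, X ω * Y ω ∂μ; ∫ ω, X ω * Y ω ∂μ, ∫ ω, Y ω ^ 2 ∂μ].PosSemidef := by
  refine PosSemidef.of_dotProduct_mulVec_nonneg ?_ fun v => ?_
  · ext i j; fin_cases i <;> fin_cases j <;> rfl
  · have hquad := integral_linear_combination_sq hX hY (v 0) (v 1)
    have hnonneg : 0 ≤ ∫ ω, (v 0 * X ω + v 1 * Y ω) ^ 2 ∂μ :=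
      integral_nonneg fun ω => sq_nonneg _
    simp only [dotProduct, star_trivial, mulVec, of_apply, cons_val', cons_val_fin_one,
      Fin.sum_univ_two, cons_val_zero, cons_val_one]
    linarith

end SecondMoments

theorem abs_satScalar_le (η a : ℝ) : |satScalar η a| ≤ |η| := by
  have hsign : |Real.sign a| ≤ 1 := by
    rcases Real.sign_apply_eq a with h | h | h <;> simp [h]
  have hmin : |min |a| η| ≤ |η| := by
    rcases le_total |a| η with h | h
    · rw [min_eq_left h, abs_abs]; exact h.trans (le_abs_self η)
    · rw [min_eq_right h]
  calc |satScalar η a| = |Real.sign a| * |min |a| η| := abs_mul _ _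
    _ ≤ 1 * |η| := mul_le_mul hsign hmin (abs_nonneg _) zero_le_one
    _ = |η| := one_mul _

theorem satScalar_of_abs_le {η a : ℝ} (h : |a| ≤ η) : satScalar η a = a := by
  rw [satScalar, min_eq_left h]
  rcases lt_trichotomy a 0 with ha | rfl | ha
  · rw [Real.sign_of_neg ha, abs_of_neg ha]; ring
  · simp
  · rw [Real.sign_of_pos ha, abs_of_pos ha]; ring

theorem Real.measurable_sign : Measurable Real.sign :=
  Measurable.ite measurableSet_Iio measurable_const
    (Measurable.ite measurableSet_Ioi measurable_const measurable_const)

theorem measurable_satScalar (η : ℝ) : Measurable (satScalar η) :=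
  Real.measurable_sign.mul (measurable_id.abs.min measurable_const)

theorem memLp_satScalar_comp {Ω : Type*} [MeasurableSpace Ω] {μ : Measure Ω} [IsFiniteMeasure μ]
    {w : Ω → ℝ} (hw : AEMeasurable w μ) (η : ℝ) (p : ENNReal) :
    MemLp (fun ω => satScalar η (w ω)) p μ :=
  .of_bound ((measurable_satScalar η).comp_aemeasurable hw).aestronglyMeasurable |η|
    (ae_of_all _ fun ω => abs_satScalar_le η (w ω))

theorem sigw_eq_kronecker (n T : ℕ) (α₁ α₂ α₃ : ℝ) :
    Sigw n T α₁ α₂ α₃ = !![α₁, α₂; α₂, α₃] ⊗ₖ (1 : Matrix (Fin T × Fin n) _ ℝ) := by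
  ext x y
  simp [Sigw, one_apply]

theorem concat2_self {p n : ℕ} (T : ℕ) (X : ℕ → Matrix (Fin p) (Fin n) ℝ) :
    concat2 T X X = (concat1 T X).submatrix id Prod.snd := by
  ext r c
  simp [concat2, concat1]

section Blend

variable {n m : ℕ} {A : Matrix (Fin n) (Fin n) ℝ} {B : Matrix (Fin n) (Fin m) ℝ} {T : ℕ}
  {Q : Matrix (Fin n) (Fin n) ℝ} {P : Matrix (Fin m) (Fin m) ℝ} {α₁ α₂ α₃ : ℝ}

theorem blendFeasible_self {η₁ η₂ xmax umax : ℝ} {R : ℕ → Matrix (Fin n) (Fin n) ℝ}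
    {M : ℕ → Matrix (Fin m) (Fin n) ℝ} (h : SLSFeasible A B T R M)
    (hR : η₂ * concatNorm T R ≤ xmax) (hM : η₂ * concatNorm T M ≤ umax) :
    BlendFeasible A B T η₁ η₂ xmax umax R R M M :=
  ⟨h, h, by linarith, by linarith⟩

theorem blendCost_self (R : ℕ → Matrix (Fin n) (Fin n) ℝ) (M : ℕ → Matrix (Fin m) (Fin n) ℝ) :
    blendCost T Q P α₁ α₂ α₃ R R M M =
      (α₁ + 2 * α₂ + α₃) * (trace (concat1 T R * (concat1 T R)ᵀ * Q) +
        trace (concat1 T M * (concat1 T M)ᵀ * P)) := by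
  simp only [blendCost, concat2_self, sigw_eq_kronecker,
    submatrix_snd_mul_kronecker_one_mul_transpose, Fin.sum_univ_two, smul_mul, trace_smul,
    smul_eq_mul]
  simp only [of_apply, cons_val', cons_val_zero, cons_val_fin_one, cons_val_one]
  ring

theorem blendCost_nonneg (hG : !![α₁, α₂; α₂, α₃].PosSemidef) (hQ : Q.PosSemidef)
    (hP : P.PosSemidef) (R1 R2 : ℕ → Matrix (Fin n) (Fin n) ℝ)
    (M1 M2 : ℕ → Matrix (Fin m) (Fin n) ℝ) :
    0 ≤ blendCost T Q P α₁ α₂ α₃ R1 R2 M1 M2 := by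
  have hsandwich : ∀ {p : ℕ} (C : Matrix (Fin p) (Fin 2 × Fin T × Fin n) ℝ),
      (C * Sigw n T α₁ α₂ α₃ * Cᵀ).PosSemidef := fun C => by
    rw [sigw_eq_kronecker, ← conjTranspose_eq_transpose_of_trivial]
    exact (hG.kronecker PosSemidef.one).mul_mul_conjTranspose_same C
  exact add_nonneg ((hsandwich _).trace_mul_nonneg hQ) ((hsandwich _).trace_mul_nonneg hP)

end Blend

theorem blend_relaxation_beats_linear_general (n m T : ℕ)
    (A : Matrix (Fin n) (Fin n) ℝ) (B : Matrix (Fin n) (Fin m) ℝ)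
    (η₁ η₂ : ℝ)
    (xmax umax : ℝ)
    (Q : Matrix (Fin n) (Fin n) ℝ) (P : Matrix (Fin m) (Fin m) ℝ)
    (hQ : Q.PosSemidef) (hP : P.PosSemidef)
    {Ω : Type*} [MeasurableSpace Ω] (μ : Measure Ω) [IsProbabilityMeasure μ]
    (w : Ω → ℝ) (hwmeas : Measurable w) (hwbdd : ∀ᵐ ω ∂μ, |w ω| ≤ η₂)
    (σ : ℝ) (hvar : ∫ ω, (w ω) ^ 2 ∂μ = σ ^ 2)
    (α₁ α₂ α₃ : ℝ)
    (hα₁ : α₁ = ∫ ω, (satScalar η₁ (w ω)) ^ 2 ∂μ)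
    (hα₂ : α₂ = ∫ ω, satScalar η₁ (w ω) * (satScalar η₂ (w ω) - satScalar η₁ (w ω)) ∂μ)
    (hα₃ : α₃ = ∫ ω, (satScalar η₂ (w ω) - satScalar η₁ (w ω)) ^ 2 ∂μ) :
    (α₁ + 2 * α₂ + α₃ = σ ^ 2) ∧
    (∀ (R : ℕ → Matrix (Fin n) (Fin n) ℝ) (M : ℕ → Matrix (Fin m) (Fin n) ℝ),
      SLSFeasible A B T R M →
      η₂ * concatNorm T R ≤ xmax → η₂ * concatNorm T M ≤ umax →
      BlendFeasible A B T η₁ η₂ xmax umax R R M M ∧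
      blendCost T Q P α₁ α₂ α₃ R R M M =
        σ ^ 2 * (Matrix.trace (concat1 T R * (concat1 T R)ᵀ * Q) +
                 Matrix.trace (concat1 T M * (concat1 T M)ᵀ * P))) ∧
    (∀ (R : ℕ → Matrix (Fin n) (Fin n) ℝ) (M : ℕ → Matrix (Fin m) (Fin n) ℝ),
      SLSFeasible A B T R M →
      η₂ * concatNorm T R ≤ xmax → η₂ * concatNorm T M ≤ umax →
      sInf {c : ℝ | ∃ (R1 R2 : ℕ → Matrix (Fin n) (Fin n) ℝ)
          (M1 M2 : ℕ → Matrix (Fin m) (Fin n) ℝ),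
          BlendFeasible A B T η₁ η₂ xmax umax R1 R2 M1 M2 ∧
          c = blendCost T Q P α₁ α₂ α₃ R1 R2 M1 M2} ≤
        σ ^ 2 * (Matrix.trace (concat1 T R * (concat1 T R)ᵀ * Q) +
                 Matrix.trace (concat1 T M * (concat1 T M)ᵀ * P))) := by
  have hX := memLp_satScalar_comp (μ := μ) hwmeas.aemeasurable η₁ 2
  have hY : MemLp (fun ω => satScalar η₂ (w ω) - satScalar η₁ (w ω)) 2 μ :=
    (memLp_satScalar_comp hwmeas.aemeasurable η₂ 2).sub hX
  have hG : !![α₁, α₂; α₂, α₃].PosSemidef := by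
    subst hα₁ hα₂ hα₃
    exact posSemidef_second_moments hX hY
  have ha : α₁ + 2 * α₂ + α₃ = σ ^ 2 :=
    calc α₁ + 2 * α₂ + α₃
        = ∫ ω, (1 * satScalar η₁ (w ω) + 1 * (satScalar η₂ (w ω) - satScalar η₁ (w ω))) ^ 2 ∂μ := by
          rw [integral_linear_combination_sq hX hY, hα₁, hα₂, hα₃]; ring
      _ = ∫ ω, w ω ^ 2 ∂μ :=
          integral_congr_ae (hwbdd.mono fun ω h => by simp [satScalar_of_abs_le h])
      _ = σ ^ 2 := hvar
  refine ⟨ha, fun R M h hR hM => ⟨blendFeasible_self h hR hM, by rw [blendCost_self, ha]⟩,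
    fun R M h hR hM => ?_⟩
  rw [← ha, ← blendCost_self]
  refine csInf_le ⟨0, ?_⟩ ⟨R, R, M, M, blendFeasible_self h hR hM, rfl⟩
  rintro c ⟨R1, R2, M1, M2, -, rfl⟩
  exact blendCost_nonneg hG hQ hP R1 R2 M1 M2

/-- Theorem V.2 — the nonlinear blend relaxation never does
worse than the best linear controller. With
`α₁ = E[s_{η₁}(w)²]`, `α₂ = E[s_{η₁}(w)(s_{η₂}(w) − s_{η₁}(w))]`,
`α₃ = E[(s_{η₂}(w) − s_{η₁}(w))²]` for a centered random variable `w` with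
`|w| ≤ η₂` a.s. and variance `σ²`:
(a) `α₁ + 2α₂ + α₃ = σ²`;
(b) any SLS-feasible linear pair `(R, M)` with `η₂‖R‖ ≤ x_max`,
`η₂‖M‖ ≤ u_max` yields a blend-feasible tuple `(R, R, M, M)` whose cost is
`σ²(tr(R Rᵀ Q) + tr(M Mᵀ P))`;
(c) consequently the infimum of the cost over blend-feasible tuples is at most
`σ²(tr(R Rᵀ Q) + tr(M Mᵀ P))` for every such linear pair. -/
theorem blend_relaxation_beats_linear (n m T : ℕ) (hT : 1 ≤ T)
    (A : Matrix (Fin n) (Fin n) ℝ) (B : Matrix (Fin n) (Fin m) ℝ)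
    (η₁ η₂ : ℝ) (hη1 : 0 ≤ η₁) (hη12 : η₁ ≤ η₂) (hη2 : 0 < η₂)
    (xmax umax : ℝ) (hxmax : 0 < xmax) (humax : 0 < umax)
    (Q : Matrix (Fin n) (Fin n) ℝ) (P : Matrix (Fin m) (Fin m) ℝ)
    (hQ : Q.PosSemidef) (hP : P.PosSemidef)
    {Ω : Type*} [MeasurableSpace Ω] (μ : Measure Ω) [IsProbabilityMeasure μ]
    (w : Ω → ℝ) (hwmeas : Measurable w) (hwbdd : ∀ᵐ ω ∂μ, |w ω| ≤ η₂)
    (σ : ℝ) (hmean : ∫ ω, w ω ∂μ = 0) (hvar : ∫ ω, (w ω) ^ 2 ∂μ = σ ^ 2)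
    (α₁ α₂ α₃ : ℝ)
    (hα₁ : α₁ = ∫ ω, (satScalar η₁ (w ω)) ^ 2 ∂μ)
    (hα₂ : α₂ = ∫ ω, satScalar η₁ (w ω) * (satScalar η₂ (w ω) - satScalar η₁ (w ω)) ∂μ)
    (hα₃ : α₃ = ∫ ω, (satScalar η₂ (w ω) - satScalar η₁ (w ω)) ^ 2 ∂μ) :
    (α₁ + 2 * α₂ + α₃ = σ ^ 2) ∧
    (∀ (R : ℕ → Matrix (Fin n) (Fin n) ℝ) (M : ℕ → Matrix (Fin m) (Fin n) ℝ),
      SLSFeasible A B T R M →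
      η₂ * concatNorm T R ≤ xmax → η₂ * concatNorm T M ≤ umax →
      BlendFeasible A B T η₁ η₂ xmax umax R R M M ∧
      blendCost T Q P α₁ α₂ α₃ R R M M =
        σ ^ 2 * (Matrix.trace (concat1 T R * (concat1 T R)ᵀ * Q) +
                 Matrix.trace (concat1 T M * (concat1 T M)ᵀ * P))) ∧
    (∀ (R : ℕ → Matrix (Fin n) (Fin n) ℝ) (M : ℕ → Matrix (Fin m) (Fin n) ℝ),
      SLSFeasible A B T R M →
      η₂ * concatNorm T R ≤ xmax → η₂ * concatNorm T M ≤ umax →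
      sInf {c : ℝ | ∃ (R1 R2 : ℕ → Matrix (Fin n) (Fin n) ℝ)
          (M1 M2 : ℕ → Matrix (Fin m) (Fin n) ℝ),
          BlendFeasible A B T η₁ η₂ xmax umax R1 R2 M1 M2 ∧
          c = blendCost T Q P α₁ α₂ α₃ R1 R2 M1 M2} ≤
        σ ^ 2 * (Matrix.trace (concat1 T R * (concat1 T R)ᵀ * Q) +
                 Matrix.trace (concat1 T M * (concat1 T M)ᵀ * P))) :=
  blend_relaxation_beats_linear_general n m T A B η₁ η₂ xmax umax Q P hQ hP μ w hwmeas hwbdd σ hvar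
    α₁ α₂ α₃ hα₁ hα₂ hα₃
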